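/- Let G be a prodiscrete topological group, and let G^∧ = Aut(F_G) be its prodiscrete completion, equipped with the group topology whose open subgroups are exactly the subgroups U_{X,x}. Then G^∧ is complete: the canonical homomorphism ι_{G^∧} : G^∧ → (G^∧)^∧ = Aut(F_{G^∧}) is an isomorphism of groups. -/

import Mathlib

open CategoryTheory

universe u

namespace ProdiscreteCompletion

variable (G : Type u) [Group G] [TopologicalSpace G]

/-- The category `G-Set` of continuous discrete `G`-sets: `G`-sets in which the stabilizer of
every point is an open subgroup of `G` (equivalently, the action map is continuous for the
discrete topology on the set). -/
abbrev ContGSet :=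
  ObjectProperty.FullSubcategory (fun X : Action (Type u) G =>
    ∀ x : X.V, IsOpen {g : G | X.ρ g x = x})

/-- The forgetful functor `F_G : G-Set ⥤ Set` on continuous discrete `G`-sets. -/
abbrev forgetContGSet : ContGSet G ⥤ Type u :=
  ObjectProperty.ι _ ⋙ Action.forget _ _

variable {G}

/-- For `g : G`, the natural automorphism of the forgetful functor whose component at each
continuous discrete `G`-set `X` is the action of `g` on `X`. -/
def iotaIso (g : G) : forgetContGSet G ≅ forgetContGSet G :=
  NatIso.ofComponents
    (fun X => Equiv.toIso
      { toFun := X.obj.ρ g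
        invFun := X.obj.ρ g⁻¹
        left_inv := fun x => by
          have h : X.obj.ρ (g⁻¹ * g) x = X.obj.ρ g⁻¹ (X.obj.ρ g x) :=
            by rw [X.obj.ρ.map_mul g⁻¹ g]; rfl
          rw [inv_mul_cancel, map_one] at h
          exact h.symm
        right_inv := fun x => by
          have h : X.obj.ρ (g * g⁻¹) x = X.obj.ρ g (X.obj.ρ g⁻¹ x) :=
            by rw [X.obj.ρ.map_mul g g⁻¹]; rfl
          rw [mul_inv_cancel, map_one] at h
          exact h.symm })
    (fun {X Y} f => by ext x; exact (ConcreteCategory.congr_hom (f.hom.comm g) x).symm)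

variable (G)

/-- The canonical group homomorphism `ι_G : G → G^∧ = Aut (F_G)` sending `g ∈ G` to the
natural automorphism of the forgetful functor acting by `g` on each continuous discrete
`G`-set. -/
def iota : G →* Aut (forgetContGSet G) where
  toFun := iotaIso
  map_one' := by
    ext X x
    show (iotaIso 1).hom.app X x = _
    simp [iotaIso]
    rfl
  map_mul' g₁ g₂ := by
    ext X x
    have h : X.obj.ρ (g₁ * g₂) x = X.obj.ρ g₁ (X.obj.ρ g₂ x) :=
      by rw [X.obj.ρ.map_mul g₁ g₂]; rfl
    exact h

variable {G}

/-- The stabilizer subgroup `U_{X,x} ⊆ Aut (F_G)` of a point `x` of a continuous discrete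
`G`-set `X`. -/
def USub (X : ContGSet G) (x : X.obj.V) : Subgroup (Aut (forgetContGSet G)) where
  carrier := {γ | γ.hom.app X x = x}
  one_mem' := rfl
  mul_mem' := by
    intro γ δ hγ hδ
    show (γ * δ).hom.app X x = x
    rw [Aut.Aut_mul_def]
    show γ.hom.app X (δ.hom.app X x) = x
    rw [show δ.hom.app X x = x from hδ]
    exact hγ
  inv_mem' := by
    intro γ hγ
    show γ⁻¹.hom.app X x = x
    conv_lhs => rw [← show γ.hom.app X x = x from hγ]
    rw [Aut.Aut_inv_def]
    exact ConcreteCategory.congr_hom (congrArg (fun τ : forgetContGSet G ⟶ forgetContGSet G => τ.app X)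
      γ.hom_inv_id) x


/-!
Every continuous discrete `G`-set `X` is also a continuous discrete `G^∧`-set, since the
stabilizers `U_{X,x}` are open. Restricting an automorphism `Θ` of `F_{G^∧}` to these sets
therefore gives an element of `G^∧`, and restriction undoes `ι_{G^∧}` by construction.
Conversely, let `Y` be a continuous discrete `G^∧`-set and `y ∈ Y`. The stabilizer of `y` is
open, so it contains some `U_{X,x}`, and `δ x ↦ δ y` is a well-defined `G^∧`-map from the
`G^∧`-orbit of `x` (a `G`-set, as `ι_G` maps into `G^∧`) to `Y`. Naturality of `Θ` along this
map, evaluated at `x`, shows that `Θ` acts on `y` as its restriction does.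
-/

variable (G)

abbrev Completion : Type (u + 1) :=
  Aut (forgetContGSet G)

variable {G}

section Orbit

variable (X : ContGSet G) (x : X.obj.V)

def orbitSubMulAction : SubMulAction G (ToType X.obj) where
  carrier := Set.range fun δ : Completion G => δ.hom.app X x
  smul_mem' g := by
    rintro _ ⟨δ, rfl⟩
    exact ⟨iota G g * δ, rfl⟩

def orbit : ContGSet G where
  obj := Action.ofMulAction G (orbitSubMulAction X x)
  property (z : orbitSubMulAction X x) := by
    change IsOpen (MulAction.stabilizer G z : Set G)
    rw [SubMulAction.stabilizer_of_subMul]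
    exact X.property z.1

def orbitIncl : orbit X x ⟶ X where
  hom :=
    { hom := TypeCat.ofHom Subtype.val
      comm _ := rfl }

theorem orbit_app_val (δ : Completion G) (z : (orbit X x).obj.V) :
    (δ.hom.app (orbit X x) z).1 = δ.hom.app X z.1 := by
  exact (NatTrans.naturality_apply δ.hom (orbitIncl X x) z).symm

def orbitBase : (orbit X x).obj.V :=
  ⟨x, 1, rfl⟩

end Orbit

section CompletionSets

variable [TopologicalSpace (Completion G)]
  (hopen : ∀ (X : ContGSet G) (x : X.obj.V), IsOpen (USub X x : Set (Completion G)))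

def toCompletionSet (X : ContGSet G) : ContGSet (Completion G) where
  obj :=
    { V := ULift.{u + 1} X.obj.V
      ρ :=
        { toFun γ := TypeCat.ofHom fun z => ULift.up (γ.hom.app X z.down)
          map_one' := rfl
          map_mul' _ _ := rfl } }
  property z := by
    convert hopen X z.down using 1
    ext γ
    exact ULift.ext_iff

def toCompletionSetMap {X Y : ContGSet G} (f : X ⟶ Y) :
    toCompletionSet hopen X ⟶ toCompletionSet hopen Y where
  hom :=
    { hom := TypeCat.ofHom fun z => ULift.up (f.hom.hom z.down)
      comm γ := by
        ext z
        exact congrArg ULift.up (NatTrans.naturality_apply γ.hom f z.down).symm }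

def iotaInv (Θ : Completion (Completion G)) : Completion G :=
  NatIso.ofComponents
    (fun X => (Equiv.ulift.symm.trans
      ((Θ.app (toCompletionSet hopen X)).toEquiv.trans Equiv.ulift)).toIso)
    (fun {X _} f => by
      refine ConcreteCategory.hom_ext _ _ fun x => ?_
      exact congrArg ULift.down (NatTrans.naturality_apply Θ.hom
        (X := toCompletionSet hopen X) (toCompletionSetMap hopen f) ⟨x⟩))

theorem iotaInv_iota (γ : Completion G) : iotaInv hopen (iota (Completion G) γ) = γ := by
  ext X x
  rfl

section OrbitMap

variable {Y : ContGSet (Completion G)} {y : ToType Y.obj} {X : ContGSet G} {x : X.obj.V}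

theorem smul_eq_smul_of_app_eq (hle : USub X x ≤ MulAction.stabilizer (Completion G) y)
    {δ₁ δ₂ : Completion G} (h : δ₁.hom.app X x = δ₂.hom.app X x) : δ₁ • y = δ₂ • y := by
  have hmem : δ₂⁻¹ * δ₁ ∈ USub X x := by
    change δ₂.inv.app X (δ₁.hom.app X x) = x
    rw [h]
    exact Iso.hom_inv_id_app_apply δ₂ X x
  rw [← inv_smul_eq_iff, ← mul_smul]
  exact hle hmem

variable (y)

noncomputable def orbitLift (z : (orbit X x).obj.V) : ToType Y.obj :=
  z.2.choose • y

variable {y}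

theorem orbitLift_eq (hle : USub X x ≤ MulAction.stabilizer (Completion G) y)
    {δ : Completion G} {z : (orbit X x).obj.V} (hz : δ.hom.app X x = z.1) :
    orbitLift y z = δ • y :=
  smul_eq_smul_of_app_eq hle (z.2.choose_spec.trans hz.symm)

noncomputable def orbitMap (hle : USub X x ≤ MulAction.stabilizer (Completion G) y) :
    toCompletionSet hopen (orbit X x) ⟶ Y where
  hom :=
    { hom := TypeCat.ofHom fun z => orbitLift y z.down
      comm γ := by
        ext z
        refine (orbitLift_eq hle ?_).trans (mul_smul γ z.down.2.choose y)
        exact (congrArg (γ.hom.app X) z.down.2.choose_spec).trans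
          (orbit_app_val X x γ z.down).symm }

end OrbitMap

theorem iota_iotaInv
    (hbasis : ∀ K : Subgroup (Completion G), IsOpen (K : Set (Completion G)) →
      ∃ (X : ContGSet G) (x : X.obj.V), USub X x ≤ K)
    (Θ : Completion (Completion G)) : iota (Completion G) (iotaInv hopen Θ) = Θ := by
  ext Y (y : ToType Y.obj)
  obtain ⟨X, x, hle⟩ := hbasis (MulAction.stabilizer _ y) (Y.property y)
  have hbase : orbitLift y (orbitBase X x) = y :=
    (orbitLift_eq hle (δ := 1) rfl).trans (one_smul _ y)
  have hinv : orbitLift y ((iotaInv hopen Θ).hom.app (orbit X x) (orbitBase X x)) =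
      iotaInv hopen Θ • y :=
    orbitLift_eq hle (orbit_app_val X x (iotaInv hopen Θ) (orbitBase X x)).symm
  have hnat : Θ.hom.app Y (orbitLift y (orbitBase X x)) =
      orbitLift y ((iotaInv hopen Θ).hom.app (orbit X x) (orbitBase X x)) :=
    NatTrans.naturality_apply Θ.hom (orbitMap hopen hle) ⟨orbitBase X x⟩
  rw [hbase, hinv] at hnat
  exact hnat.symm

end CompletionSets

theorem iota_bijective [TopologicalSpace (Completion G)]
    (hopen : ∀ (X : ContGSet G) (x : X.obj.V), IsOpen (USub X x : Set (Completion G)))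
    (hbasis : ∀ K : Subgroup (Completion G), IsOpen (K : Set (Completion G)) →
      ∃ (X : ContGSet G) (x : X.obj.V), USub X x ≤ K) :
    Function.Bijective (iota (Completion G)) :=
  Function.bijective_iff_has_inverse.mpr
    ⟨iotaInv hopen, iotaInv_iota hopen, iota_iotaInv hopen hbasis⟩

theorem completion_is_complete_general
    (G : Type u) [Group G] [TopologicalSpace G]
    (t : TopologicalSpace (Aut (forgetContGSet G)))
    (htop : ∀ K : Subgroup (Aut (forgetContGSet G)),
      @IsOpen _ t (K : Set (Aut (forgetContGSet G))) ↔
        ∃ (X : ContGSet G) (x : X.obj.V), K = USub X x) :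
    Function.Bijective (@iota (Aut (forgetContGSet G)) _ t) :=
  @iota_bijective G _ _ t (fun X x => (htop _).mpr ⟨X, x, rfl⟩) fun K hK =>
    ((htop K).mp hK).imp fun _ => Exists.imp fun _ => Eq.ge

/-- Proposition `P:complete` of the paper.  Let `G` be a prodiscrete
topological group and equip its prodiscrete completion `G^∧ = Aut (F_G)` with the group
topology whose open subgroups are exactly the stabilizer subgroups `U_{X,x}`.  Then `G^∧` is
complete: the canonical homomorphism `ι_{G^∧} : G^∧ → (G^∧)^∧` is an isomorphism of groups. -/
theorem completion_is_complete
    (G : Type u) [Group G] [TopologicalSpace G] [IsTopologicalGroup G]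
    (hG : (nhds (1 : G)).HasBasis (fun H : Subgroup G => IsOpen (H : Set G))
      (fun H : Subgroup G => (H : Set G)))
    (t : TopologicalSpace (Aut (forgetContGSet G)))
    (ht : @IsTopologicalGroup (Aut (forgetContGSet G)) t _)
    (htop : ∀ K : Subgroup (Aut (forgetContGSet G)),
      @IsOpen _ t (K : Set (Aut (forgetContGSet G))) ↔
        ∃ (X : ContGSet G) (x : X.obj.V), K = USub X x) :
    Function.Bijective (@iota (Aut (forgetContGSet G)) _ t) :=
  completion_is_complete_general G t htop

end ProdiscreteCompletion
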